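/- arXiv:2010.11820 — 2 statements merged into one kernel-verified Lean document; each statement's English description precedes it below -/
import Mathlib

section
/- For probability mass functions P_d and P_r on a finite set C with strictly positive values, and λ ∈ [0,1], the unique minimizer over probability mass functions Q of (1−λ)·KL(Q‖P_d) + λ·KL(Q‖P_r) is Q*(y) = P_d(y)^{1−λ} P_r(y)^λ / Z, where Z = Σ_{k∈C} P_d(k)^{1−λ} P_r(k)^λ. -/
open Real

/-- KL divergence between finitely-supported distributions, with the
convention `0 * log 0 = 0` (automatic since `0 * x = 0` in `ℝ`). -/
noncomputable def KLdiv {C : Type*} [Fintype C] (Q P : C → ℝ) : ℝ :=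
  ∑ y, Q y * Real.log (Q y / P y)

lemma point_ineq (q p : ℝ) (hp : 0 < p) (hq : 0 ≤ q) :
    q - p ≤ q * Real.log (q / p) ∧ (q * Real.log (q / p) = q - p → q = p) := by
  rcases hq.eq_or_lt with h | h
  · refine ⟨by simp [← h]; linarith, ?_⟩
    intro heq; rw [← h] at heq; simp at heq; linarith
  · have hx : 0 < p / q := div_pos hp h
    have hlogdiv : Real.log (q / p) = - Real.log (p / q) := by
      rw [← Real.log_inv, inv_div]
    have hq' : q * (p / q - 1) = p - q := by field_simp
    constructor
    · have hlog := Real.log_le_sub_one_of_pos hx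
      have h2 := mul_le_mul_of_nonneg_left hlog h.le
      rw [hq'] at h2
      rw [hlogdiv]; nlinarith
    · intro heq
      by_contra hne
      have hx1 : p / q ≠ 1 := by
        intro h1
        apply hne
        field_simp at h1
        linarith
      have hlog := Real.log_lt_sub_one_of_pos hx hx1
      have h2 := mul_lt_mul_of_pos_left hlog h
      rw [hq'] at h2
      rw [hlogdiv] at heq
      nlinarith

lemma gibbs {C : Type*} [Fintype C] (Q P : C → ℝ) (hP : ∀ y, 0 < P y)
    (hQ : ∀ y, 0 ≤ Q y) (hQ1 : ∑ y, Q y = 1) (hP1 : ∑ y, P y = 1) :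
    0 ≤ KLdiv Q P ∧ (KLdiv Q P = 0 → Q = P) := by
  have hpt := fun y => point_ineq (Q y) (P y) (hP y) (hQ y)
  have hsum : ∑ y, (Q y - P y) = 0 := by
    rw [Finset.sum_sub_distrib, hQ1, hP1]; ring
  have hle : ∑ y, (Q y - P y) ≤ KLdiv Q P :=
    Finset.sum_le_sum fun y _ => (hpt y).1
  constructor
  · rw [hsum] at hle; exact hle
  · intro h0
    have hzero : ∑ y, (Q y * Real.log (Q y / P y) - (Q y - P y)) = 0 := by
      rw [Finset.sum_sub_distrib, hsum]
      unfold KLdiv at h0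
      rw [h0]; ring
    have heach := (Finset.sum_eq_zero_iff_of_nonneg
      (fun y _ => by linarith [(hpt y).1])).mp hzero
    funext y
    exact (hpt y).2 (by linarith [heach y (Finset.mem_univ y)])

/-- The geometric mixture `Pd^(1-λ) Pr^λ / Z` is the unique minimizer of
`(1-λ) KL(Q‖Pd) + λ KL(Q‖Pr)` over probability mass functions `Q`. -/
theorem geometric_mixture_minimizes_KL
    {C : Type*} [Fintype C] [Nonempty C]
    (Pd Pr : C → ℝ)
    (hPd : ∀ y, 0 < Pd y) (hPr : ∀ y, 0 < Pr y)
    (hPd1 : ∑ y, Pd y = 1) (hPr1 : ∑ y, Pr y = 1)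
    (l : ℝ) (hl0 : 0 ≤ l) (hl1 : l ≤ 1)
    (Z : ℝ) (hZ : Z = ∑ k, Pd k ^ (1 - l) * Pr k ^ l)
    (Qstar : C → ℝ) (hQstar : ∀ y, Qstar y = Pd y ^ (1 - l) * Pr y ^ l / Z) :
    ∀ Q : C → ℝ, (∀ y, 0 ≤ Q y) → ∑ y, Q y = 1 →
      ((1 - l) * KLdiv Qstar Pd + l * KLdiv Qstar Pr
          ≤ (1 - l) * KLdiv Q Pd + l * KLdiv Q Pr)
      ∧ ((1 - l) * KLdiv Q Pd + l * KLdiv Q Pr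
          = (1 - l) * KLdiv Qstar Pd + l * KLdiv Qstar Pr → Q = Qstar) := by
  have hZpos : 0 < Z := by
    rw [hZ]
    exact Finset.sum_pos (fun k _ => mul_pos (Real.rpow_pos_of_pos (hPd k) _)
      (Real.rpow_pos_of_pos (hPr k) _)) Finset.univ_nonempty
  have hQs_pos : ∀ y, 0 < Qstar y := fun y => by
    rw [hQstar y]
    exact div_pos (mul_pos (Real.rpow_pos_of_pos (hPd y) _)
      (Real.rpow_pos_of_pos (hPr y) _)) hZpos
  have hQs_sum : ∑ y, Qstar y = 1 := by
    simp only [hQstar]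
    rw [← Finset.sum_div, ← hZ, div_self hZpos.ne']
  have key : ∀ Q : C → ℝ, (∀ y, 0 ≤ Q y) → ∑ y, Q y = 1 →
      (1 - l) * KLdiv Q Pd + l * KLdiv Q Pr = KLdiv Q Qstar - Real.log Z := by
    intro Q hQ hQ1
    have hpt : ∀ y, Q y * Real.log (Q y / Qstar y)
        = (1 - l) * (Q y * Real.log (Q y / Pd y))
          + l * (Q y * Real.log (Q y / Pr y)) + Q y * Real.log Z := by
      intro y
      rcases (hQ y).eq_or_lt with h | h
      · simp [← h]
      · have hpd := hPd y
        have hpr := hPr y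
        rw [hQstar y,
          Real.log_div h.ne' (by positivity),
          Real.log_div h.ne' hpd.ne', Real.log_div h.ne' hpr.ne',
          Real.log_div (by positivity) hZpos.ne',
          Real.log_mul (by positivity) (by positivity),
          Real.log_rpow hpd, Real.log_rpow hpr]
        ring
    have hKQ : KLdiv Q Qstar
        = (1 - l) * KLdiv Q Pd + l * KLdiv Q Pr + Real.log Z := by
      unfold KLdiv
      rw [Finset.sum_congr rfl fun y _ => hpt y]
      rw [Finset.sum_add_distrib, Finset.sum_add_distrib,
        ← Finset.mul_sum, ← Finset.mul_sum, ← Finset.sum_mul, hQ1, one_mul]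
    linarith
  have hKQstar0 : KLdiv Qstar Qstar = 0 := by
    unfold KLdiv
    refine Finset.sum_eq_zero fun y _ => ?_
    rw [div_self (hQs_pos y).ne', Real.log_one, mul_zero]
  intro Q hQ hQ1
  have hgibbs := gibbs Q Qstar hQs_pos hQ hQ1 hQs_sum
  have hkeyQ := key Q hQ hQ1
  have hkeyQs := key Qstar (fun y => (hQs_pos y).le) hQs_sum
  constructor
  · rw [hkeyQ, hkeyQs, hKQstar0]
    linarith [hgibbs.1]
  · intro heq
    rw [hkeyQ, hkeyQs, hKQstar0] at heq
    exact hgibbs.2 (by linarith)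
end

section
/- For strictly positive probability mass functions P_d and P_r on a finite set and λ ∈ [0,1], the minimum value of (1−λ)KL(Q‖P_d) + λKL(Q‖P_r) over probability distributions Q equals −log Z(λ), where Z(λ) = Σ_k P_d(k)^{1−λ}P_r(k)^λ; in particular this minimum value is nonnegative and equals 0 iff λ ∈ {0,1} or P_d = P_r. -/
open Real

/-- Gibbs' inequality. -/
lemma gibbs_aux {C : Type*} [Fintype C] (Q P : C → ℝ)
    (hQ : ∀ y, 0 ≤ Q y) (hP : ∀ y, 0 < P y)
    (hQ1 : ∑ y, Q y = 1) (hP1 : ∑ y, P y = 1) : 0 ≤ KLdiv Q P := by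
  have h1 : ∀ y, Q y * Real.log (P y / Q y) ≤ P y - Q y := by
    intro y
    rcases eq_or_lt_of_le (hQ y) with h | h
    · simp [← h, (hP y).le]
    · calc Q y * Real.log (P y / Q y) ≤ Q y * (P y / Q y - 1) :=
            mul_le_mul_of_nonneg_left
              (Real.log_le_sub_one_of_pos (div_pos (hP y) h)) (hQ y)
        _ = P y - Q y := by field_simp
  have h2 : ∑ y, Q y * Real.log (P y / Q y) ≤ 0 := by
    calc ∑ y, Q y * Real.log (P y / Q y) ≤ ∑ y, (P y - Q y) :=
          Finset.sum_le_sum fun y _ => h1 y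
      _ = 0 := by rw [Finset.sum_sub_distrib, hQ1, hP1, sub_self]
  have h3 : KLdiv Q P = -∑ y, Q y * Real.log (P y / Q y) := by
    rw [KLdiv, ← Finset.sum_neg_distrib]
    refine Finset.sum_congr rfl fun y _ => ?_
    rcases eq_or_lt_of_le (hQ y) with h | h
    · simp [← h]
    · rw [Real.log_div (hP y).ne' h.ne', Real.log_div h.ne' (hP y).ne']; ring
  rw [h3]; linarith

/-- Strict AM-GM equality case. -/
lemma amgm_eq_aux {a b lam : ℝ} (ha : 0 < a) (hb : 0 < b)
    (hl0 : 0 < lam) (hl1 : lam < 1)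
    (h : a ^ (1 - lam) * b ^ lam = (1 - lam) * a + lam * b) : a = b := by
  by_contra hab
  have h1l' : (0:ℝ) < 1 - lam := by linarith
  have hsum : (1 - lam) + lam = 1 := by ring
  have hlt : (1 - lam) * Real.log a + lam * Real.log b
      < Real.log ((1 - lam) * a + lam * b) := by
    have := strictConcaveOn_log_Ioi.2 (Set.mem_Ioi.2 ha) (Set.mem_Ioi.2 hb) hab
      h1l' hl0 hsum
    simpa [smul_eq_mul] using this
  have heq : a ^ (1 - lam) * b ^ lam
      = Real.exp ((1 - lam) * Real.log a + lam * Real.log b) := by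
    rw [Real.rpow_def_of_pos ha, Real.rpow_def_of_pos hb, ← Real.exp_add]
    ring_nf
  have h1l : 0 < 1 - lam := by linarith
  have hpos : 0 < (1 - lam) * a + lam * b := by positivity
  have : a ^ (1 - lam) * b ^ lam < (1 - lam) * a + lam * b := by
    rw [heq]
    calc Real.exp ((1 - lam) * Real.log a + lam * Real.log b)
        < Real.exp (Real.log ((1 - lam) * a + lam * b)) := Real.exp_lt_exp.2 hlt
      _ = (1 - lam) * a + lam * b := Real.exp_log hpos
  linarith [h]

/-- The minimum of `(1-λ)KL(Q‖Pd) + λKL(Q‖Pr)` over probability distributions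
`Q` equals `-log Z(λ)`; this value is nonnegative, and is `0` iff `λ ∈ {0,1}`
or `Pd = Pr`. -/
theorem min_KL_mixture_eq_neg_log_normalizer
    {C : Type*} [Fintype C] [Nonempty C]
    (Pd Pr : C → ℝ)
    (hPd : ∀ y, 0 < Pd y) (hPr : ∀ y, 0 < Pr y)
    (hPd1 : ∑ y, Pd y = 1) (hPr1 : ∑ y, Pr y = 1)
    (lam : ℝ) (hl0 : 0 ≤ lam) (hl1 : lam ≤ 1)
    (Z : ℝ) (hZ : Z = ∑ k, Pd k ^ (1 - lam) * Pr k ^ lam)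
    (Qstar : C → ℝ) (hQstar : ∀ y, Qstar y = Pd y ^ (1 - lam) * Pr y ^ lam / Z) :
    (∀ Q : C → ℝ, (∀ y, 0 ≤ Q y) → ∑ y, Q y = 1 →
        -Real.log Z ≤ (1 - lam) * KLdiv Q Pd + lam * KLdiv Q Pr)
    ∧ (1 - lam) * KLdiv Qstar Pd + lam * KLdiv Qstar Pr = -Real.log Z
    ∧ 0 ≤ -Real.log Z
    ∧ (-Real.log Z = 0 ↔ lam = 0 ∨ lam = 1 ∨ Pd = Pr) := by
  have hterm : ∀ k, 0 < Pd k ^ (1 - lam) * Pr k ^ lam := fun k =>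
    mul_pos (Real.rpow_pos_of_pos (hPd k) _) (Real.rpow_pos_of_pos (hPr k) _)
  have hZpos : 0 < Z := by
    rw [hZ]; exact Finset.sum_pos (fun k _ => hterm k) Finset.univ_nonempty
  have hQsPos : ∀ y, 0 < Qstar y := fun y => by
    rw [hQstar]; exact div_pos (hterm y) hZpos
  have hQs1 : ∑ y, Qstar y = 1 := by
    have : ∑ y, Qstar y = (∑ y, Pd y ^ (1 - lam) * Pr y ^ lam) / Z := by
      rw [Finset.sum_div]; exact Finset.sum_congr rfl fun y _ => hQstar y
    rw [this, ← hZ, div_self hZpos.ne']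
  -- key identity
  have key : ∀ Q : C → ℝ, (∀ y, 0 ≤ Q y) → ∑ y, Q y = 1 →
      (1 - lam) * KLdiv Q Pd + lam * KLdiv Q Pr = KLdiv Q Qstar - Real.log Z := by
    intro Q hQ hQ1
    have hsum : ∑ y, Q y * Real.log Z = Real.log Z := by
      rw [← Finset.sum_mul, hQ1, one_mul]
    have : KLdiv Q Qstar - Real.log Z
        = ∑ y, (Q y * Real.log (Q y / Qstar y) - Q y * Real.log Z) := by
      rw [Finset.sum_sub_distrib, hsum]; rfl
    rw [this, KLdiv, KLdiv, Finset.mul_sum, Finset.mul_sum,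
      ← Finset.sum_add_distrib]
    refine Finset.sum_congr rfl fun y _ => ?_
    rcases eq_or_lt_of_le (hQ y) with h | h
    · simp [← h]
    · have hlogQs : Real.log (Qstar y)
          = (1 - lam) * Real.log (Pd y) + lam * Real.log (Pr y) - Real.log Z := by
        rw [hQstar, Real.log_div (hterm y).ne' hZpos.ne',
          Real.log_mul (Real.rpow_pos_of_pos (hPd y) _).ne'
            (Real.rpow_pos_of_pos (hPr y) _).ne',
          Real.log_rpow (hPd y), Real.log_rpow (hPr y)]
      rw [Real.log_div h.ne' (hPd y).ne', Real.log_div h.ne' (hPr y).ne',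
        Real.log_div h.ne' (hQsPos y).ne', hlogQs]
      ring
  have hKLQsQs : KLdiv Qstar Qstar = 0 := by
    unfold KLdiv
    refine Finset.sum_eq_zero fun y _ => ?_
    rw [div_self (hQsPos y).ne', Real.log_one, mul_zero]
  -- Z ≤ 1
  have hZ1 : Z ≤ 1 := by
    have h1l : 0 ≤ 1 - lam := by linarith
    calc Z = ∑ k, Pd k ^ (1 - lam) * Pr k ^ lam := hZ
      _ ≤ ∑ k, ((1 - lam) * Pd k + lam * Pr k) :=
          Finset.sum_le_sum fun k _ =>
            Real.geom_mean_le_arith_mean2_weighted h1l hl0 (hPd k).le (hPr k).le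
              (by ring)
      _ = 1 := by
          rw [Finset.sum_add_distrib, ← Finset.mul_sum, ← Finset.mul_sum,
            hPd1, hPr1]; ring
  have hlogZ : Real.log Z ≤ 0 := Real.log_nonpos hZpos.le hZ1
  refine ⟨?_, ?_, by linarith, ?_⟩
  · intro Q hQ hQ1
    have := gibbs_aux Q Qstar hQ hQsPos hQ1 hQs1
    rw [key Q hQ hQ1]; linarith
  · rw [key Qstar (fun y => (hQsPos y).le) hQs1, hKLQsQs, zero_sub]
  · constructor
    · intro h
      have hZeq : Z = 1 := by
        have : Real.log Z = 0 := by linarith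
        rcases Real.log_eq_zero.1 this with h' | h' | h' <;> first | exact h' | linarith
      by_cases h0 : lam = 0
      · exact Or.inl h0
      by_cases h1 : lam = 1
      · exact Or.inr (Or.inl h1)
      refine Or.inr (Or.inr ?_)
      have hl0' : 0 < lam := lt_of_le_of_ne hl0 (Ne.symm h0)
      have hl1' : lam < 1 := lt_of_le_of_ne hl1 h1
      have hle : ∀ k ∈ Finset.univ (α := C),
          Pd k ^ (1 - lam) * Pr k ^ lam ≤ (1 - lam) * Pd k + lam * Pr k :=
        fun k _ => Real.geom_mean_le_arith_mean2_weighted (by linarith) hl0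
          (hPd k).le (hPr k).le (by ring)
      have hsums : ∑ k, Pd k ^ (1 - lam) * Pr k ^ lam
          = ∑ k, ((1 - lam) * Pd k + lam * Pr k) := by
        rw [← hZ, hZeq, Finset.sum_add_distrib, ← Finset.mul_sum, ← Finset.mul_sum,
          hPd1, hPr1]; ring
      have heach := (Finset.sum_eq_sum_iff_of_le hle).1 hsums
      funext y
      exact amgm_eq_aux (hPd y) (hPr y) hl0' hl1' (heach y (Finset.mem_univ y))
    · intro h
      have hZeq : Z = 1 := by
        rcases h with h | h | h
        · rw [hZ]; simp [h, Real.rpow_one, hPd1]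
        · rw [hZ]; simp [h, Real.rpow_one, hPr1]
        · rw [hZ, h]
          have : ∀ k, Pr k ^ (1 - lam) * Pr k ^ lam = Pr k := by
            intro k
            rw [← Real.rpow_add (hPr k)]
            norm_num
          simp only [this, hPr1]
      rw [hZeq, Real.log_one, neg_zero]
end
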